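/- arXiv:1904.02694 — 3 statements merged into one kernel-verified Lean document; each statement's English description precedes it below -/
import Mathlib

section
/- For n ≥ 1 and 0 ≤ k < n, the number of inversion sequences of length n avoiding the consecutive pattern 100 and ending in k satisfies |I_{n,k}(100)| = |I_{n-1}(100)| - Σ_{j=k+1}^{n-3} |I_{n-2,j}(100)|, where |I_0(100)| = 1 by convention. -/
def IsInvSeq {n : ℕ} (e : Fin n → Fin n) : Prop := ∀ i : Fin n, (e i : ℕ) ≤ (i : ℕ)

def extSeq {n : ℕ} (e : Fin n → Fin n) : ℕ → ℕ := fun i => if h : i < n then (e ⟨i, h⟩ : ℕ) else 0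

/-- `e` contains the consecutive pattern 100: `e_i > e_{i+1} = e_{i+2}`. -/
def Contains100 {n : ℕ} (e : Fin n → Fin n) : Prop :=
  ∃ i : ℕ, i + 2 < n ∧ extSeq e (i + 1) < extSeq e i ∧ extSeq e (i + 1) = extSeq e (i + 2)

/-- `|I_n(100)|`. -/
noncomputable def I100 (n : ℕ) : ℕ := Nat.card {e : Fin n → Fin n // IsInvSeq e ∧ ¬ Contains100 e}

/-- `|I_{n,k}(100)|`: those with last entry equal to `k`. -/
noncomputable def I100k (n k : ℕ) : ℕ :=
  Nat.card {e : Fin n → Fin n // IsInvSeq e ∧ ¬ Contains100 e ∧ extSeq e (n - 1) = k}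

/-!
Deleting the last entry of an inversion sequence of length `N + 1` that ends in `k ≤ N` is a
bijection onto the inversion sequences of length `N`, and the longer sequence avoids 100 exactly
when the shorter one does and does not end in `a, k` with `a > k`. The 100-avoiders of length `N`
that do end in such a descent are, after deleting the last entry once more, the 100-avoiders of
length `N - 1` ending in some `j > k` (appending `k` to those never creates a 100). Hence
`|I_{N+1,k}| = |I_N| - ∑_{j > k} |I_{N-1,j}|`.
-/

open Finset

lemma Nat.card_subtype_eq_card_and_add_card_and_not {α : Type*} [Finite α] (p q : α → Prop) :
    Nat.card {x // p x} = Nat.card {x // p x ∧ q x} + Nat.card {x // p x ∧ ¬ q x} := by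
  classical
  have := Fintype.ofFinite α
  simp only [Nat.card_eq_fintype_card, Fintype.card_subtype, ← filter_filter]
  exact (card_filter_add_card_filter_not _).symm

lemma Nat.card_subtype_lt_eq_sum {α : Type*} [Finite α] (p : α → Prop) (f : α → ℕ) (k M : ℕ)
    (hf : ∀ x, p x → f x ≤ M) :
    Nat.card {x // p x ∧ k < f x} = ∑ j ∈ Icc (k + 1) M, Nat.card {x // p x ∧ f x = j} := by
  classical
  have := Fintype.ofFinite α
  simp only [Nat.card_eq_fintype_card, Fintype.card_subtype]
  rw [card_eq_sum_card_fiberwise (f := f) (t := Icc (k + 1) M) fun x hx => by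
    simp only [coe_filter, Set.mem_ofPred_eq, mem_univ, true_and] at hx
    simpa [Nat.succ_le_iff] using ⟨hx.2, hf x hx.1⟩]
  refine sum_congr rfl fun j hj => ?_
  rw [filter_filter]
  refine congrArg card (filter_congr fun x _ => ?_)
  rw [mem_Icc] at hj
  constructor
  · rintro ⟨⟨hp, -⟩, rfl⟩; exact ⟨hp, rfl⟩
  · rintro ⟨hp, rfl⟩; exact ⟨⟨hp, by omega⟩, rfl⟩

def snocSeq {N : ℕ} (f : Fin N → Fin N) (k : ℕ) : Fin (N + 1) → Fin (N + 1) :=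
  fun i => if h : (i : ℕ) < N then (f ⟨i, h⟩).castSucc else ⟨min k N, by omega⟩

def initSeq {N : ℕ} (e : Fin (N + 1) → Fin (N + 1)) : Fin N → Fin N :=
  fun i => ⟨min (e i.castSucc) i, by omega⟩

def EndsWithDescentTo {N : ℕ} (f : Fin N → Fin N) (k : ℕ) : Prop :=
  ∃ i, i + 2 = N ∧ extSeq f (i + 1) < extSeq f i ∧ extSeq f (i + 1) = k

section SnocInit

variable {N : ℕ}

lemma extSeq_snocSeq (f : Fin N → Fin N) {k : ℕ} (hk : k ≤ N) (i : ℕ) :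
    extSeq (snocSeq f k) i = if i < N then extSeq f i else if i = N then k else 0 := by
  unfold extSeq snocSeq
  rcases lt_trichotomy i N with hi | rfl | hi
  · simp [hi, Nat.lt_succ_of_lt hi]
  · simp [hk]
  · simp [hi.ne', hi.not_gt, show ¬i < N + 1 by omega]

lemma extSeq_le_of_isInvSeq {f : Fin N → Fin N} (hf : IsInvSeq f) (i : ℕ) : extSeq f i ≤ i := by
  unfold extSeq
  split_ifs with h
  exacts [hf ⟨i, h⟩, Nat.zero_le i]

lemma isInvSeq_snocSeq {f : Fin N → Fin N} (hf : IsInvSeq f) {k : ℕ} (hk : k ≤ N) :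
    IsInvSeq (snocSeq f k) := by
  intro i
  unfold snocSeq
  split_ifs with h
  · exact hf ⟨i, h⟩
  · simp only
    omega

lemma isInvSeq_initSeq (e : Fin (N + 1) → Fin (N + 1)) : IsInvSeq (initSeq e) :=
  fun _ => min_le_right _ _

lemma snocSeq_initSeq {e : Fin (N + 1) → Fin (N + 1)} (he : IsInvSeq e) :
    snocSeq (initSeq e) (extSeq e N) = e := by
  funext i
  apply Fin.ext
  rcases Fin.eq_castSucc_or_eq_last i with ⟨i, rfl⟩ | rfl
  · simpa [snocSeq, initSeq] using he i.castSucc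
  · simpa [snocSeq, extSeq, Fin.last] using he (Fin.last N)

lemma initSeq_snocSeq {f : Fin N → Fin N} (hf : IsInvSeq f) (k : ℕ) :
    initSeq (snocSeq f k) = f := by
  funext i
  apply Fin.ext
  simp [snocSeq, initSeq, hf i]

lemma contains100_snocSeq_iff (f : Fin N → Fin N) {k : ℕ} (hk : k ≤ N) :
    Contains100 (snocSeq f k) ↔ Contains100 f ∨ EndsWithDescentTo f k := by
  simp only [Contains100, EndsWithDescentTo, extSeq_snocSeq f hk]
  constructor
  · rintro ⟨i, hi, h⟩
    rcases Nat.lt_or_ge (i + 2) N with hi' | hi'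
    · exact Or.inl ⟨i, hi', by simpa [show i + 1 < N by omega, show i < N by omega, hi'] using h⟩
    · refine Or.inr ⟨i, by omega, ?_⟩
      simpa [show i + 1 < N by omega, show i < N by omega, show ¬ i + 2 < N by omega,
        show i + 2 = N by omega] using h
  · rintro (⟨i, hi, h⟩ | ⟨i, rfl, h⟩)
    · exact ⟨i, by omega, by simpa [show i + 1 < N by omega, show i < N by omega, hi] using h⟩
    · exact ⟨i, by omega, by simpa using h⟩

lemma card_isInvSeq_last_eq_card_snocSeq (P : (Fin (N + 1) → Fin (N + 1)) → Prop) {k : ℕ} (hk : k ≤ N) :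
    Nat.card {e // IsInvSeq e ∧ extSeq e N = k ∧ P e} =
      Nat.card {f : Fin N → Fin N // IsInvSeq f ∧ P (snocSeq f k)} :=
  Nat.card_congr
    { toFun e := ⟨initSeq e.1, isInvSeq_initSeq _, by
        obtain ⟨e, he, rfl, hP⟩ := e
        rwa [snocSeq_initSeq he]⟩
      invFun f := ⟨snocSeq f.1 k, isInvSeq_snocSeq f.2.1 hk, by simp [extSeq_snocSeq _ hk], f.2.2⟩
      left_inv e := by
        obtain ⟨e, he, rfl, -⟩ := e
        exact Subtype.ext (snocSeq_initSeq he)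
      right_inv f := Subtype.ext (initSeq_snocSeq f.2.1 k) }

end SnocInit

lemma I100k_succ_eq_card {N k : ℕ} (hk : k ≤ N) :
    I100k (N + 1) k =
      Nat.card {f : Fin N → Fin N // IsInvSeq f ∧ ¬Contains100 f ∧ ¬EndsWithDescentTo f k} :=
  calc I100k (N + 1) k = Nat.card {e // IsInvSeq e ∧ extSeq e N = k ∧ ¬Contains100 e} :=
        Nat.card_congr (Equiv.subtypeEquivRight fun e => by simp only [Nat.add_sub_cancel]; tauto)
    _ = Nat.card {f : Fin N → Fin N // IsInvSeq f ∧ ¬Contains100 (snocSeq f k)} :=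
        card_isInvSeq_last_eq_card_snocSeq _ hk
    _ = _ := Nat.card_congr (Equiv.subtypeEquivRight fun f => by
        rw [contains100_snocSeq_iff f hk, not_or])

lemma EndsWithDescentTo.add_two_lt {N k : ℕ} {f : Fin N → Fin N} (h : EndsWithDescentTo f k)
    (hf : IsInvSeq f) : k + 2 < N := by
  obtain ⟨i, hi, hlt, rfl⟩ := h
  have := extSeq_le_of_isInvSeq hf i
  omega

lemma endsWithDescentTo_iff {m : ℕ} (f : Fin (m + 2) → Fin (m + 2)) (k : ℕ) :
    EndsWithDescentTo f k ↔ extSeq f (m + 1) = k ∧ k < extSeq f m := by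
  constructor
  · rintro ⟨i, hi, h⟩
    obtain rfl : i = m := by omega
    omega
  · rintro ⟨rfl, h⟩
    exact ⟨m, rfl, h, rfl⟩

lemma card_endsWithDescentTo_eq_card_last_gt {m k : ℕ} (hk : k ≤ m + 1) :
    Nat.card {f : Fin (m + 2) → Fin (m + 2) //
        IsInvSeq f ∧ ¬Contains100 f ∧ EndsWithDescentTo f k} =
      Nat.card {g : Fin (m + 1) → Fin (m + 1) // IsInvSeq g ∧ ¬Contains100 g ∧ k < extSeq g m} :=
  calc _ = Nat.card {f // IsInvSeq f ∧ extSeq f (m + 1) = k ∧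
          (¬Contains100 f ∧ k < extSeq f m)} :=
        Nat.card_congr (Equiv.subtypeEquivRight fun f => by rw [endsWithDescentTo_iff]; tauto)
    _ = Nat.card {g : Fin (m + 1) → Fin (m + 1) // IsInvSeq g ∧
          (¬Contains100 (snocSeq g k) ∧ k < extSeq (snocSeq g k) m)} :=
        card_isInvSeq_last_eq_card_snocSeq _ hk
    _ = _ := Nat.card_congr (Equiv.subtypeEquivRight fun g => by
        have hends : k < extSeq g m → ¬EndsWithDescentTo g k := by
          rintro hlt ⟨i, hi, -, rfl⟩
          obtain rfl : i + 1 = m := by omega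
          exact lt_irrefl _ hlt
        rw [contains100_snocSeq_iff g hk, extSeq_snocSeq g hk, if_pos m.lt_succ_self]
        tauto)

lemma card_last_gt_eq_sum (m k : ℕ) :
    Nat.card {g : Fin (m + 1) → Fin (m + 1) // IsInvSeq g ∧ ¬Contains100 g ∧ k < extSeq g m} =
      ∑ j ∈ Icc (k + 1) m, I100k (m + 1) j := by
  simp only [← and_assoc]
  rw [Nat.card_subtype_lt_eq_sum _ (extSeq · m) k m fun g hg => extSeq_le_of_isInvSeq hg.1 m]
  simp only [I100k, Nat.add_sub_cancel, and_assoc]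

lemma card_endsWithDescentTo (N k : ℕ) :
    Nat.card {f : Fin N → Fin N // IsInvSeq f ∧ ¬Contains100 f ∧ EndsWithDescentTo f k} =
      ∑ j ∈ Icc (k + 1) (N - 2), I100k (N - 1) j := by
  by_cases hk : k + 2 < N
  · obtain ⟨m, rfl⟩ : ∃ m, N = m + 2 := ⟨N - 2, by omega⟩
    rw [card_endsWithDescentTo_eq_card_last_gt (by omega), card_last_gt_eq_sum]
    rfl
  · rw [Icc_eq_empty (by omega), sum_empty, Nat.card_eq_zero]
    exact Or.inl ⟨fun ⟨_, hf, _, h⟩ => hk (h.add_two_lt hf)⟩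

theorem stmt4_general (n : ℕ) (k : ℕ) (hk : k < n) :
    I100k n k = I100 (n - 1) - ∑ j ∈ Finset.Icc (k + 1) (n - 3), I100k (n - 2) j := by
  obtain ⟨N, rfl⟩ : ∃ N, n = N + 1 := ⟨n - 1, by omega⟩
  have hsplit := Nat.card_subtype_eq_card_and_add_card_and_not
    (fun f : Fin N → Fin N => IsInvSeq f ∧ ¬Contains100 f) (EndsWithDescentTo · k)
  simp only [and_assoc] at hsplit
  simp only [Nat.add_sub_cancel, show N + 1 - 3 = N - 2 by omega, show N + 1 - 2 = N - 1 by omega]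
  rw [I100k_succ_eq_card (by omega), I100, hsplit, card_endsWithDescentTo]
  omega

theorem stmt4 (n : ℕ) (hn : 1 ≤ n) (k : ℕ) (hk : k < n) :
    I100k n k = I100 (n - 1) - ∑ j ∈ Finset.Icc (k + 1) (n - 3), I100k (n - 2) j :=
  stmt4_general n k hk
end

section
/- Let π ∈ S_n and e = Θ(π). Then π contains the vincular pattern 3-214 (there exist j < i with π_{i+1} < π_i < π_j < π_{i+2}) if and only if e contains the consecutive pattern 120 (there exists i with e_{i+2} < e_i < e_{i+1}). Consequently, |I_n(120)| = |S_n(3-214)| for all n. -/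
/-- The inversion sequence of a permutation: `Θ(π)_i = #{j < i : π_j > π_i}`,
extended to `ℕ → ℕ`. -/
def thetaExt {n : ℕ} (π : Equiv.Perm (Fin n)) : ℕ → ℕ := fun i =>
  if h : i < n then (Finset.univ.filter (fun j : Fin n => j < ⟨i, h⟩ ∧ π ⟨i, h⟩ < π j)).card
  else 0

/-- `f` (a permutation of length `n`, as a sequence) contains the vincular pattern 3-214:
positions `j < i` with `i+2 < n` and `f_{i+1} < f_i < f_j < f_{i+2}`. -/
def Contains3214 (n : ℕ) (f : ℕ → ℕ) : Prop :=
  ∃ j i : ℕ, j < i ∧ i + 2 < n ∧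
    f (i + 1) < f i ∧ f i < f j ∧ f j < f (i + 2)

/-- `f` contains the consecutive pattern 120: `f_{i+2} < f_i < f_{i+1}`. -/
def Contains120 (n : ℕ) (f : ℕ → ℕ) : Prop :=
  ∃ i : ℕ, i + 2 < n ∧ f (i + 2) < f i ∧ f i < f (i + 1)

open Finset

instance {n : ℕ} (e : Fin n → Fin n) : Decidable (IsInvSeq e) :=
  inferInstanceAs (Decidable (∀ i : Fin n, (e i : ℕ) ≤ (i : ℕ)))

section Aux

variable {n : ℕ}

/-- The finset of inversions of `π` at position `i`. -/
def Sset (π : Equiv.Perm (Fin n)) (i : Fin n) : Finset (Fin n) :=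
  Finset.univ.filter (fun j : Fin n => j < i ∧ π i < π j)

lemma card_Sset_le (π : Equiv.Perm (Fin n)) (i : Fin n) : (Sset π i).card ≤ (i : ℕ) := by
  have h1 : Sset π i ⊆ Finset.Iio i := by
    intro j hj
    simp only [Sset, mem_filter] at hj
    simpa using hj.2.1
  have := Finset.card_le_card h1
  rwa [Fin.card_Iio] at this

/-- The inversion sequence of a permutation, as `Fin n → Fin n`. -/
def theta (π : Equiv.Perm (Fin n)) : Fin n → Fin n := fun i =>
  ⟨(Sset π i).card, lt_of_le_of_lt (card_Sset_le π i) i.2⟩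

lemma theta_isInvSeq (π : Equiv.Perm (Fin n)) : IsInvSeq (theta π) :=
  fun i => card_Sset_le π i

lemma thetaExt_eq (π : Equiv.Perm (Fin n)) : thetaExt π = extSeq (theta π) := by
  funext k
  by_cases h : k < n
  · simp [thetaExt, extSeq, theta, Sset, h]
  · simp [thetaExt, extSeq, h]

lemma extSeq_apply (e : Fin n → Fin n) {k : ℕ} (h : k < n) : extSeq e k = (e ⟨k, h⟩ : ℕ) :=
  dif_pos h

lemma mem_Sset {π : Equiv.Perm (Fin n)} {i x : Fin n} :
    x ∈ Sset π i ↔ x < i ∧ π i < π x := by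
  simp [Sset]

/-- Core combinatorial lemma, in terms of `Fin` indices. -/
lemma core (π : Equiv.Perm (Fin n)) (i : ℕ) (h : i + 2 < n) :
    (∃ j : Fin n, (j : ℕ) < i ∧ π ⟨i+1, by omega⟩ < π ⟨i, by omega⟩ ∧
        π ⟨i, by omega⟩ < π j ∧ π j < π ⟨i+2, by omega⟩) ↔
      ((Sset π ⟨i+2, by omega⟩).card < (Sset π ⟨i, by omega⟩).card ∧
       (Sset π ⟨i, by omega⟩).card < (Sset π ⟨i+1, by omega⟩).card) := by
  set I0 : Fin n := ⟨i, by omega⟩ with hI0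
  set I1 : Fin n := ⟨i+1, by omega⟩ with hI1
  set I2 : Fin n := ⟨i+2, by omega⟩ with hI2
  have hI01 : I0 < I1 := Fin.mk_lt_mk.mpr (by omega)
  have hI02 : I0 < I2 := Fin.mk_lt_mk.mpr (by omega)
  have hI12 : I1 < I2 := Fin.mk_lt_mk.mpr (by omega)
  -- basic subset facts
  have sub20 : π I1 < π I0 → π I0 < π I2 → Sset π I2 ⊆ Sset π I0 := by
    intro h10 h02 x hx
    rw [mem_Sset] at hx ⊢
    obtain ⟨hx1, hx2⟩ := hx
    have hx0 : π I0 < π x := lt_trans h02 hx2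
    have hne0 : x ≠ I0 := by rintro rfl; exact lt_irrefl _ hx0
    have hne1 : x ≠ I1 := by rintro rfl; exact lt_asymm h10 (lt_trans h02 hx2)
    refine ⟨?_, hx0⟩
    have h1 : (x : ℕ) < i + 2 := hx1
    have h2 : (x : ℕ) ≠ i := fun hh => hne0 (Fin.ext hh)
    have h3 : (x : ℕ) ≠ i + 1 := fun hh => hne1 (Fin.ext hh)
    exact (show (x : ℕ) < i by omega)
  constructor
  · rintro ⟨j, hji, h10, h0j, hj2⟩
    have hjI0 : j < I0 := hji
    have h02 : π I0 < π I2 := lt_trans h0j hj2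
    constructor
    · -- card S2 < card S0
      refine Finset.card_lt_card ((Finset.ssubset_iff_of_subset (sub20 h10 h02)).mpr ?_)
      refine ⟨j, mem_Sset.mpr ⟨hjI0, h0j⟩, fun hj => ?_⟩
      exact lt_asymm hj2 (mem_Sset.mp hj).2
    · -- card S0 < card S1
      have sub01 : Sset π I0 ⊆ Sset π I1 := by
        intro x hx
        rw [mem_Sset] at hx ⊢
        exact ⟨lt_trans hx.1 hI01, lt_trans h10 hx.2⟩
      refine Finset.card_lt_card ((Finset.ssubset_iff_of_subset sub01).mpr ?_)
      refine ⟨I0, mem_Sset.mpr ⟨hI01, h10⟩, fun hc => ?_⟩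
      exact lt_irrefl _ (mem_Sset.mp hc).1
  · rintro ⟨hc1, hc2⟩
    -- first: π I1 < π I0
    have h10 : π I1 < π I0 := by
      by_contra hcon
      have hne : π I0 ≠ π I1 := π.injective.ne (by
        simp [hI0, hI1, Fin.ext_iff])
      have h01 : π I0 < π I1 := lt_of_le_of_ne (not_lt.mp hcon) hne
      have sub10 : Sset π I1 ⊆ Sset π I0 := by
        intro x hx
        rw [mem_Sset] at hx ⊢
        obtain ⟨hx1, hx2⟩ := hx
        have hx0 : π I0 < π x := lt_trans h01 hx2
        have hne0 : x ≠ I0 := by rintro rfl; exact lt_irrefl _ hx0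
        refine ⟨?_, hx0⟩
        have h1 : (x : ℕ) < i + 1 := hx1
        have h2 : (x : ℕ) ≠ i := fun hh => hne0 (Fin.ext hh)
        exact (show (x : ℕ) < i by omega)
      exact absurd (Finset.card_le_card sub10) (not_le.mpr hc2)
    -- second: π I0 < π I2
    have h02 : π I0 < π I2 := by
      by_contra hcon
      have hne : π I2 ≠ π I0 := π.injective.ne (by
        simp [hI0, hI2, Fin.ext_iff])
      have h20 : π I2 < π I0 := lt_of_le_of_ne (not_lt.mp hcon) hne
      have sub02 : Sset π I0 ⊆ Sset π I2 := by
        intro x hx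
        rw [mem_Sset] at hx ⊢
        exact ⟨lt_trans hx.1 hI02, lt_trans h20 hx.2⟩
      have hss : Sset π I0 ⊂ Sset π I2 := by
        refine (Finset.ssubset_iff_of_subset sub02).mpr ?_
        refine ⟨I0, mem_Sset.mpr ⟨hI02, h20⟩, fun hc => ?_⟩
        exact lt_irrefl _ (mem_Sset.mp hc).1
      exact absurd (Finset.card_lt_card hss) (lt_asymm hc1)
    -- witness
    have hnsub : ¬ Sset π I0 ⊆ Sset π I2 := fun hs =>
      absurd (Finset.card_le_card hs) (not_le.mpr hc1)
    obtain ⟨x, hx0, hx2⟩ := Finset.not_subset.mp hnsub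
    rw [mem_Sset] at hx0
    obtain ⟨hxI0, hπx⟩ := hx0
    have hxI2 : x < I2 := lt_trans hxI0 hI02
    have hxne2 : x ≠ I2 := ne_of_lt hxI2
    have hπx2 : π x < π I2 := by
      have hn : ¬ π I2 < π x := fun hc => hx2 (mem_Sset.mpr ⟨hxI2, hc⟩)
      exact lt_of_le_of_ne (not_lt.mp hn) (π.injective.ne hxne2)
    exact ⟨x, hxI0, h10, hπx, hπx2⟩

/-- Statement 1: the pattern correspondence. -/
lemma key (π : Equiv.Perm (Fin n)) :
    Contains3214 n (extSeq (⇑π)) ↔ Contains120 n (extSeq (theta π)) := by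
  constructor
  · rintro ⟨j, i, hji, hi, h1, h2, h3⟩
    have hjn : j < n := by omega
    have p0 : i < n := by omega
    have p1 : i + 1 < n := by omega
    rw [extSeq_apply _ p1, extSeq_apply _ p0] at h1
    rw [extSeq_apply _ p0, extSeq_apply _ hjn] at h2
    rw [extSeq_apply _ hjn, extSeq_apply _ hi] at h3
    have hcards := (core π i hi).mp ⟨⟨j, hjn⟩, hji, Fin.lt_def.mpr h1, Fin.lt_def.mpr h2,
      Fin.lt_def.mpr h3⟩
    refine ⟨i, hi, ?_, ?_⟩
    · rw [extSeq_apply _ hi, extSeq_apply _ p0]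
      exact hcards.1
    · rw [extSeq_apply _ p0, extSeq_apply _ p1]
      exact hcards.2
  · rintro ⟨i, hi, h1, h2⟩
    have p0 : i < n := by omega
    have p1 : i + 1 < n := by omega
    rw [extSeq_apply _ hi, extSeq_apply _ p0] at h1
    rw [extSeq_apply _ p0, extSeq_apply _ p1] at h2
    obtain ⟨x, hx1, hx2, hx3, hx4⟩ := (core π i hi).mpr ⟨h1, h2⟩
    have hxn : (x : ℕ) < n := x.2
    refine ⟨(x : ℕ), i, hx1, hi, ?_, ?_, ?_⟩
    · rw [extSeq_apply _ p1, extSeq_apply _ p0]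
      exact hx2
    · rw [extSeq_apply _ p0, extSeq_apply _ hxn]
      exact hx3
    · rw [extSeq_apply _ hxn, extSeq_apply _ hi]
      exact hx4

end Aux

section Inj

variable {n : ℕ}

/-- Restriction of a permutation of `Fin (n+1)` to a permutation of `Fin n`, by deleting the
last position and its value. -/
noncomputable def rPerm (π : Equiv.Perm (Fin (n+1))) : Equiv.Perm (Fin n) :=
  Equiv.ofBijective
    (fun i => (finSuccAboveEquiv (π (Fin.last n))).symm
      ⟨π i.castSucc, π.injective.ne (Fin.ne_of_lt (Fin.castSucc_lt_last i))⟩)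
    (Finite.injective_iff_bijective.mp (by
      intro a b hab
      have h1 := (finSuccAboveEquiv (π (Fin.last n))).symm.injective hab
      have h2 : π a.castSucc = π b.castSucc := congrArg Subtype.val h1
      exact Fin.castSucc_injective n (π.injective h2)))

lemma succAbove_rPerm (π : Equiv.Perm (Fin (n+1))) (i : Fin n) :
    (π (Fin.last n)).succAbove (rPerm π i) = π i.castSucc := by
  have h1 : finSuccAboveEquiv (π (Fin.last n)) (rPerm π i) =
      ⟨π i.castSucc, π.injective.ne (Fin.ne_of_lt (Fin.castSucc_lt_last i))⟩ :=
    Equiv.apply_symm_apply _ _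
  rw [finSuccAboveEquiv_apply] at h1
  exact congrArg Subtype.val h1

lemma rPerm_lt_iff (π : Equiv.Perm (Fin (n+1))) (a b : Fin n) :
    rPerm π a < rPerm π b ↔ π a.castSucc < π b.castSucc := by
  rw [← Fin.succAbove_lt_succAbove_iff (p := π (Fin.last n)), succAbove_rPerm, succAbove_rPerm]

lemma theta_rPerm (π : Equiv.Perm (Fin (n+1))) (i : Fin n) :
    (theta (rPerm π) i : ℕ) = (theta π i.castSucc : ℕ) := by
  show (Sset (rPerm π) i).card = (Sset π i.castSucc).card
  have hemb : Function.Injective (Fin.castSucc : Fin n → Fin (n+1)) := Fin.castSucc_injective n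
  have hset : Sset π i.castSucc = (Sset (rPerm π) i).map ⟨Fin.castSucc, hemb⟩ := by
    ext x
    simp only [Finset.mem_map, Function.Embedding.coeFn_mk, mem_Sset]
    constructor
    · rintro ⟨hx1, hx2⟩
      have hxlt : (x : ℕ) < n := by
        have h1 : (x : ℕ) < (i : ℕ) := hx1
        exact lt_trans h1 i.2
      refine ⟨⟨(x : ℕ), hxlt⟩, ⟨?_, ?_⟩, Fin.ext rfl⟩
      · exact hx1
      · rw [rPerm_lt_iff]
        have hxx : (⟨(x : ℕ), hxlt⟩ : Fin n).castSucc = x := Fin.ext rfl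
        rw [hxx]
        exact hx2
    · rintro ⟨a, ⟨ha1, ha2⟩, rfl⟩
      refine ⟨Fin.castSucc_lt_castSucc_iff.mpr ha1, ?_⟩
      exact (rPerm_lt_iff π i a).mp ha2
  rw [hset, Finset.card_map]

lemma theta_last (π : Equiv.Perm (Fin (n+1))) :
    (theta π (Fin.last n) : ℕ) = n - (π (Fin.last n) : ℕ) := by
  show (Sset π (Fin.last n)).card = _
  have h1 : Sset π (Fin.last n) = Finset.univ.filter (fun j => π (Fin.last n) < π j) := by
    ext x
    simp only [Sset, mem_filter, mem_univ, true_and]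
    constructor
    · rintro ⟨_, hb⟩; exact hb
    · intro hb
      refine ⟨Fin.lt_last_iff_ne_last.mpr ?_, hb⟩
      rintro rfl
      exact lt_irrefl _ hb
  have h2 : (Finset.univ.filter (fun j => π (Fin.last n) < π j)).card =
      (Finset.univ.filter (fun y => π (Fin.last n) < y)).card := by
    refine Finset.card_bij (fun a _ => π a) ?_ ?_ ?_
    · intro a ha
      simp only [mem_filter, mem_univ, true_and] at ha ⊢
      exact ha
    · intro a _ b _ hab
      exact π.injective hab
    · intro b hb
      simp only [mem_filter, mem_univ, true_and] at hb
      exact ⟨π.symm b, by simp [hb], by simp⟩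
  have h3 : Finset.univ.filter (fun y => π (Fin.last n) < y) = Finset.Ioi (π (Fin.last n)) := by
    ext y; simp
  rw [h1, h2, h3, Fin.card_Ioi]
  omega

lemma theta_injective : ∀ {n : ℕ} (π σ : Equiv.Perm (Fin n)), theta π = theta σ → π = σ := by
  intro n
  induction n with
  | zero =>
    intro π σ _
    ext x
    exact x.elim0
  | succ n ih =>
    intro π σ h
    have hlast : π (Fin.last n) = σ (Fin.last n) := by
      have h1 := theta_last π
      have h2 := theta_last σ
      rw [h] at h1
      have hb1 : (π (Fin.last n) : ℕ) ≤ n := Nat.lt_succ_iff.mp (π (Fin.last n)).2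
      have hb2 : (σ (Fin.last n) : ℕ) ≤ n := Nat.lt_succ_iff.mp (σ (Fin.last n)).2
      apply Fin.ext
      omega
    have hr : rPerm π = rPerm σ := by
      apply ih
      funext i
      apply Fin.ext
      rw [theta_rPerm, theta_rPerm, h]
    apply Equiv.ext
    intro x
    refine Fin.lastCases ?_ ?_ x
    · exact hlast
    · intro i
      have e1 := succAbove_rPerm π i
      have e2 := succAbove_rPerm σ i
      rw [← e1, ← e2, hr, hlast]

/-- The inversion-sequence map as a map into the subtype of inversion sequences. -/
def thetaMap (n : ℕ) : Equiv.Perm (Fin n) → {e : Fin n → Fin n // IsInvSeq e} :=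
  fun π => ⟨theta π, theta_isInvSeq π⟩

lemma card_invSeq (n : ℕ) :
    Fintype.card {e : Fin n → Fin n // IsInvSeq e} = Fintype.card (Equiv.Perm (Fin n)) := by
  have hequiv : {e : Fin n → Fin n // IsInvSeq e} ≃ (∀ i : Fin n, Fin ((i : ℕ) + 1)) :=
    { toFun := fun e i => ⟨(e.1 i : ℕ), Nat.lt_succ_of_le (e.2 i)⟩
      invFun := fun f => ⟨fun i => ⟨(f i : ℕ), lt_of_le_of_lt (Nat.lt_succ_iff.mp (f i).2) i.2⟩,
        fun i => Nat.lt_succ_iff.mp (f i).2⟩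
      left_inv := fun e => by
        apply Subtype.ext
        funext i
        rfl
      right_inv := fun f => by
        funext i
        rfl }
  rw [Fintype.card_congr hequiv, Fintype.card_pi, Fintype.card_perm, Fintype.card_fin]
  simp only [Fintype.card_fin]
  rw [Fin.prod_univ_eq_prod_range (fun k => k + 1), Finset.prod_range_add_one_eq_factorial]

lemma thetaMap_bijective (n : ℕ) : Function.Bijective (thetaMap n) := by
  rw [Fintype.bijective_iff_injective_and_card]
  refine ⟨?_, (card_invSeq n).symm⟩
  intro π σ h
  exact theta_injective π σ (congrArg Subtype.val h)

end Inj

theorem stmt12 (n : ℕ) :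
    (∀ π : Equiv.Perm (Fin n),
      Contains3214 n (extSeq (⇑π)) ↔ Contains120 n (thetaExt π)) ∧
    Nat.card {e : Fin n → Fin n // IsInvSeq e ∧ ¬ Contains120 n (extSeq e)} =
    Nat.card {π : Equiv.Perm (Fin n) // ¬ Contains3214 n (extSeq (⇑π))} := by
  constructor
  · intro π
    rw [thetaExt_eq]
    exact key π
  · let F : {π : Equiv.Perm (Fin n) // ¬ Contains3214 n (extSeq (⇑π))} →
        {e : Fin n → Fin n // IsInvSeq e ∧ ¬ Contains120 n (extSeq e)} :=
      fun π => ⟨theta π.1, theta_isInvSeq π.1, fun hc => π.2 ((key π.1).mpr hc)⟩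
    have hF : Function.Bijective F := by
      constructor
      · intro a b hab
        apply Subtype.ext
        exact theta_injective _ _ (congrArg Subtype.val hab)
      · rintro ⟨e, hinv, h120⟩
        obtain ⟨π, hπ⟩ := (thetaMap_bijective n).2 ⟨e, hinv⟩
        have hθ : theta π = e := congrArg Subtype.val hπ
        have havoid : ¬ Contains3214 n (extSeq (⇑π)) := by
          intro hc
          exact h120 (by rw [← hθ]; exact (key π).mp hc)
        exact ⟨⟨π, havoid⟩, Subtype.ext hθ⟩
    exact (Nat.card_congr (Equiv.ofBijective F hF)).symm
end

section
/- The consecutive patterns 0021 and 0121 in inversion sequences are super-strongly Wilf equivalent. Moreover, for all n and all subsets S, T of {1,...,n}, the number of inversion sequences e of length n with Em(0021,e) = S and Em(0121,e) = T equals the number with Em(0021,e) = T and Em(0121,e) = S. -/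
set_option linter.unreachableTactic false
set_option linter.unusedTactic false


/-- Occurrence of 0021 in (0-indexed) position `i`: `e_i = e_{i+1} < e_{i+3} < e_{i+2}`. -/
def Occ0021At (n : ℕ) (f : ℕ → ℕ) (i : ℕ) : Prop :=
  i + 3 < n ∧ f i = f (i + 1) ∧ f (i + 1) < f (i + 3) ∧ f (i + 3) < f (i + 2)

/-- Occurrence of 0121 in (0-indexed) position `i`: `e_i < e_{i+1} = e_{i+3} < e_{i+2}`. -/
def Occ0121At (n : ℕ) (f : ℕ → ℕ) (i : ℕ) : Prop :=
  i + 3 < n ∧ f i < f (i + 1) ∧ f (i + 1) = f (i + 3) ∧ f (i + 1) < f (i + 2)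

/-! ### Auxiliary machinery -/

def OccAt (n : ℕ) (f : ℕ → ℕ) (p : ℕ) : Prop := Occ0021At n f p ∨ Occ0121At n f p

instance (n : ℕ) (f : ℕ → ℕ) (i : ℕ) : Decidable (Occ0021At n f i) := by
  unfold Occ0021At; infer_instance

instance (n : ℕ) (f : ℕ → ℕ) (i : ℕ) : Decidable (Occ0121At n f i) := by
  unfold Occ0121At; infer_instance

/-- The involution on sequences: at each occurrence of 0021/0121 at position `p`,
modify the entry at `p+1`. -/
def gfun (n : ℕ) (f : ℕ → ℕ) : ℕ → ℕ
  | 0 => f 0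
  | (p+1) => if Occ0021At n f p then f (p+3) else if Occ0121At n f p then f p else f (p+1)

lemma gfun_zero (n : ℕ) (f : ℕ → ℕ) : gfun n f 0 = f 0 := rfl

lemma gfun_succ (n : ℕ) (f : ℕ → ℕ) (p : ℕ) :
    (¬ OccAt n f p ∧ gfun n f (p+1) = f (p+1)) ∨
    (Occ0021At n f p ∧ gfun n f (p+1) = f (p+3)) ∨
    (Occ0121At n f p ∧ gfun n f (p+1) = f p) := by
  by_cases h1 : Occ0021At n f p
  · exact Or.inr (Or.inl ⟨h1, by simp [gfun, h1]⟩)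
  by_cases h2 : Occ0121At n f p
  · exact Or.inr (Or.inr ⟨h2, by simp [gfun, h1, h2]⟩)
  · exact Or.inl ⟨by simp [OccAt, h1, h2], by simp [gfun, h1, h2]⟩

lemma sep1 {n : ℕ} {f : ℕ → ℕ} {p : ℕ} (h : OccAt n f p) : ¬ OccAt n f (p+1) := by
  simp only [OccAt, Occ0021At, Occ0121At, not_or, add_assoc, Nat.reduceAdd] at *
  omega

lemma sep2 {n : ℕ} {f : ℕ → ℕ} {p : ℕ} (h : OccAt n f p) : ¬ OccAt n f (p+2) := by
  simp only [OccAt, Occ0021At, Occ0121At, not_or, add_assoc, Nat.reduceAdd] at *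
  omega

set_option maxHeartbeats 1000000 in
/-- The key lemma: `gfun` swaps the two occurrence sets. -/
lemma swap (n : ℕ) (f : ℕ → ℕ) (j : ℕ) :
    (Occ0021At n (gfun n f) j ↔ Occ0121At n f j) ∧
    (Occ0121At n (gfun n f) j ↔ Occ0021At n f j) := by
  cases j with
  | zero =>
    have h1 : gfun n f 0 = f 0 := rfl
    have h2 := gfun_succ n f 0
    have h3 := gfun_succ n f 1
    have h4 := gfun_succ n f 2
    simp only [OccAt, Occ0021At, Occ0121At, not_or, not_and, not_lt, add_assoc,
      Nat.reduceAdd, Nat.zero_add, zero_add] at h2 h3 h4 ⊢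
    rcases h2 with ⟨h2o, h2⟩ | ⟨h2o, h2⟩ | ⟨h2o, h2⟩ <;>
      rcases h3 with ⟨h3o, h3⟩ | ⟨h3o, h3⟩ | ⟨h3o, h3⟩ <;>
      rcases h4 with ⟨h4o, h4⟩ | ⟨h4o, h4⟩ | ⟨h4o, h4⟩ <;>
      rw [h1, h2, h3, h4] <;> clear h1 h2 h3 h4 <;>
      first
        | (clear h2o h3o h4o; omega)
        | (clear h3o h4o; omega)
        | (clear h2o h4o; omega)
        | (clear h2o h3o; omega)
        | (clear h4o; omega)
        | (clear h3o; omega)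
        | (clear h2o; omega)
        | omega
  | succ k =>
    have h1 := gfun_succ n f k
    have h2 := gfun_succ n f (k+1)
    have h3 := gfun_succ n f (k+2)
    have h4 := gfun_succ n f (k+3)
    simp only [OccAt, Occ0021At, Occ0121At, not_or, not_and, not_lt, add_assoc,
      Nat.reduceAdd] at h1 h2 h3 h4 ⊢
    rcases h1 with ⟨h1o, h1⟩ | ⟨h1o, h1⟩ | ⟨h1o, h1⟩ <;>
      rcases h2 with ⟨h2o, h2⟩ | ⟨h2o, h2⟩ | ⟨h2o, h2⟩ <;>
      rcases h3 with ⟨h3o, h3⟩ | ⟨h3o, h3⟩ | ⟨h3o, h3⟩ <;>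
      rcases h4 with ⟨h4o, h4⟩ | ⟨h4o, h4⟩ | ⟨h4o, h4⟩ <;>
      rw [h1, h2, h3, h4] <;> clear h1 h2 h3 h4 <;>
      first
        | (clear h1o h3o h4o; omega)
        | (clear h3o h4o; omega)
        | (clear h1o h4o; omega)
        | (clear h1o h3o; omega)
        | (clear h4o; omega)
        | (clear h3o; omega)
        | (clear h1o; omega)
        | omega

lemma occAt_swap (n : ℕ) (f : ℕ → ℕ) (j : ℕ) :
    OccAt n (gfun n f) j ↔ OccAt n f j := by
  have h := swap n f j
  unfold OccAt
  rw [h.1, h.2]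
  tauto

lemma gfun_eq_of_occ {n : ℕ} {f : ℕ → ℕ} {p : ℕ} (h : OccAt n f p) :
    gfun n f p = f p := by
  cases p with
  | zero => rfl
  | succ m =>
    rcases gfun_succ n f m with ⟨_, e⟩ | ⟨ho, e⟩ | ⟨ho, e⟩
    · exact e
    · exact absurd h (sep1 (Or.inl ho))
    · exact absurd h (sep1 (Or.inr ho))

lemma gfun_eq_of_occ3 {n : ℕ} {f : ℕ → ℕ} {p : ℕ} (h : OccAt n f p) :
    gfun n f (p+3) = f (p+3) := by
  rcases gfun_succ n f (p+2) with ⟨_, e⟩ | ⟨ho, e⟩ | ⟨ho, e⟩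
  · exact e
  · exact absurd (Or.inl ho) (sep2 h)
  · exact absurd (Or.inr ho) (sep2 h)

/-- `gfun` is an involution. -/
lemma gfun_gfun (n : ℕ) (f : ℕ → ℕ) (q : ℕ) : gfun n (gfun n f) q = f q := by
  cases q with
  | zero => rfl
  | succ p =>
    have hs := swap n f p
    rcases gfun_succ n (gfun n f) p with ⟨hno, e⟩ | ⟨ho, e⟩ | ⟨ho, e⟩
    · rw [occAt_swap] at hno
      rcases gfun_succ n f p with ⟨_, e'⟩ | ⟨ho', _⟩ | ⟨ho', _⟩
      · rw [e, e']
      · exact absurd (Or.inl ho') hno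
      · exact absurd (Or.inr ho') hno
    · -- gfun f has 0021 at p, so f has 0121 at p
      have h121 : Occ0121At n f p := hs.1.mp ho
      rw [e, gfun_eq_of_occ3 (Or.inr h121)]
      have := h121.2.2.1
      omega
    · have h021 : Occ0021At n f p := hs.2.mp ho
      rw [e, gfun_eq_of_occ (Or.inl h021)]
      have := h021.2.1
      omega

lemma extSeq_lt {n : ℕ} (e : Fin n → Fin n) {q : ℕ} (hq : q < n) : extSeq e q < n := by
  simp only [extSeq, dif_pos hq]
  exact (e ⟨q, hq⟩).isLt

lemma gfun_lt {n : ℕ} (e : Fin n → Fin n) {q : ℕ} (hq : q < n) :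
    gfun n (extSeq e) q < n := by
  cases q with
  | zero => exact extSeq_lt e hq
  | succ p =>
    rcases gfun_succ n (extSeq e) p with ⟨_, eq⟩ | ⟨ho, eq⟩ | ⟨ho, eq⟩
    · rw [eq]; exact extSeq_lt e hq
    · rw [eq]; exact extSeq_lt e ho.1
    · rw [eq]; exact extSeq_lt e (by have := ho.1; omega)

/-- The involution on `Fin n → Fin n`. -/
def Phi (n : ℕ) (e : Fin n → Fin n) : Fin n → Fin n :=
  fun p => ⟨gfun n (extSeq e) p, gfun_lt e p.isLt⟩

lemma extSeq_Phi (n : ℕ) (e : Fin n → Fin n) :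
    extSeq (Phi n e) = gfun n (extSeq e) := by
  funext q
  by_cases hq : q < n
  · simp only [extSeq, dif_pos hq, Phi]
  · have h1 : extSeq (Phi n e) q = 0 := by simp [extSeq, hq]
    rw [h1]
    cases q with
    | zero => simp [gfun_zero, extSeq, hq]
    | succ p =>
      rcases gfun_succ n (extSeq e) p with ⟨_, eq⟩ | ⟨ho, eq⟩ | ⟨ho, eq⟩
      · rw [eq]; simp [extSeq, hq]
      · exact absurd ho.1 (by omega)
      · exact absurd ho.1 (by omega)

lemma extSeq_le {n : ℕ} {e : Fin n → Fin n} (he : IsInvSeq e) (q : ℕ) :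
    extSeq e q ≤ q := by
  by_cases h : q < n
  · simp only [extSeq, dif_pos h]; exact he ⟨q, h⟩
  · simp [extSeq, h]

lemma isInvSeq_Phi {n : ℕ} {e : Fin n → Fin n} (he : IsInvSeq e) :
    IsInvSeq (Phi n e) := by
  intro i
  show gfun n (extSeq e) i ≤ (i : ℕ)
  rcases hi : (i : ℕ) with _ | p
  · rw [gfun_zero]; exact (extSeq_le he 0)
  · rcases gfun_succ n (extSeq e) p with ⟨_, eq⟩ | ⟨ho, eq⟩ | ⟨ho, eq⟩
    · rw [eq]; exact extSeq_le he (p+1)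
    · rw [eq]
      have h1 := ho.2.2.2
      have h2 := extSeq_le he (p+2)
      omega
    · rw [eq]
      have := extSeq_le he p
      omega

lemma Phi_Phi (n : ℕ) (e : Fin n → Fin n) : Phi n (Phi n e) = e := by
  funext p
  apply Fin.ext
  show gfun n (extSeq (Phi n e)) p = (e p : ℕ)
  rw [extSeq_Phi, gfun_gfun]
  simp [extSeq, p.isLt]

lemma occ0021_Phi (n : ℕ) (e : Fin n → Fin n) (i : ℕ) :
    Occ0021At n (extSeq (Phi n e)) i ↔ Occ0121At n (extSeq e) i := by
  rw [extSeq_Phi]; exact (swap n (extSeq e) i).1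

lemma occ0121_Phi (n : ℕ) (e : Fin n → Fin n) (i : ℕ) :
    Occ0121At n (extSeq (Phi n e)) i ↔ Occ0021At n (extSeq e) i := by
  rw [extSeq_Phi]; exact (swap n (extSeq e) i).2

theorem stmt15 :
    (∀ (n : ℕ) (T : Finset ℕ), (∀ i ∈ T, i < n) →
      Nat.card {e : Fin n → Fin n // IsInvSeq e ∧ ∀ i : ℕ, Occ0021At n (extSeq e) i ↔ i ∈ T} =
      Nat.card {e : Fin n → Fin n // IsInvSeq e ∧ ∀ i : ℕ, Occ0121At n (extSeq e) i ↔ i ∈ T}) ∧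
    (∀ (n : ℕ) (S T : Finset ℕ), (∀ i ∈ S, i < n) → (∀ i ∈ T, i < n) →
      Nat.card {e : Fin n → Fin n // IsInvSeq e ∧
        (∀ i : ℕ, Occ0021At n (extSeq e) i ↔ i ∈ S) ∧
        (∀ i : ℕ, Occ0121At n (extSeq e) i ↔ i ∈ T)} =
      Nat.card {e : Fin n → Fin n // IsInvSeq e ∧
        (∀ i : ℕ, Occ0021At n (extSeq e) i ↔ i ∈ T) ∧
        (∀ i : ℕ, Occ0121At n (extSeq e) i ↔ i ∈ S)}) := by
  constructor
  · intro n T _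
    apply Nat.card_congr
    exact {
      toFun := fun x => ⟨Phi n x.1, isInvSeq_Phi x.2.1,
        fun i => (occ0121_Phi n x.1 i).trans (x.2.2 i)⟩
      invFun := fun x => ⟨Phi n x.1, isInvSeq_Phi x.2.1,
        fun i => (occ0021_Phi n x.1 i).trans (x.2.2 i)⟩
      left_inv := fun x => Subtype.ext (Phi_Phi n x.1)
      right_inv := fun x => Subtype.ext (Phi_Phi n x.1) }
  · intro n S T _ _
    apply Nat.card_congr
    exact {
      toFun := fun x => ⟨Phi n x.1, isInvSeq_Phi x.2.1,
        fun i => (occ0021_Phi n x.1 i).trans (x.2.2.2 i),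
        fun i => (occ0121_Phi n x.1 i).trans (x.2.2.1 i)⟩
      invFun := fun x => ⟨Phi n x.1, isInvSeq_Phi x.2.1,
        fun i => (occ0021_Phi n x.1 i).trans (x.2.2.2 i),
        fun i => (occ0121_Phi n x.1 i).trans (x.2.2.1 i)⟩
      left_inv := fun x => Subtype.ext (Phi_Phi n x.1)
      right_inv := fun x => Subtype.ext (Phi_Phi n x.1) }
end
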